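/- arXiv:2502.03440 — 6 statements merged into one kernel-verified Lean document; each statement's English description precedes it below -/
import Mathlib

section
/- The n-1 vectors H([1:1]), H([1:2]), ..., H([1:n-1]) together with the vectors 2e_{i,j} for all 1 ≤ i < j < n form a Z-linearly independent family of (n choose 2) vectors in Z^(n choose 2). -/
/-- Coordinates of `ℤ^(n choose 2)`: unordered pairs of vertices of `K_n`,
represented as ordered pairs `(a, b)` with `a < b` (0-indexed). -/
def PairIdx (n : ℕ) := {p : Fin n × Fin n // p.1 < p.2}

instance (n : ℕ) : Fintype (PairIdx n) := by unfold PairIdx; infer_instance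
instance (n : ℕ) : DecidableEq (PairIdx n) := by unfold PairIdx; infer_instance

lemma cardPairIdx (m : ℕ) : Fintype.card (PairIdx m) = m * (m - 1) / 2 := by
  have e : PairIdx m ≃ Σ b : Fin m, Fin b.val :=
    { toFun := fun p => ⟨p.val.2, ⟨p.val.1.val, p.prop⟩⟩
      invFun := fun x => ⟨(⟨x.2.val, lt_trans x.2.isLt x.1.isLt⟩, x.1), x.2.isLt⟩
      left_inv := fun p => rfl
      right_inv := fun x => rfl }
  rw [Fintype.card_congr e, Fintype.card_sigma]
  simp only [Fintype.card_fin]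
  rw [Fin.sum_univ_eq_sum_range (fun i => i) m, Finset.sum_range_id]

def eSub (n : ℕ) : {p : PairIdx n // p.val.2.val < n - 1} ≃ PairIdx (n - 1) :=
  { toFun := fun q => ⟨(⟨q.val.val.1.val, lt_trans q.val.prop q.prop⟩,
      ⟨q.val.val.2.val, q.prop⟩), q.val.prop⟩
    invFun := fun p => ⟨⟨(⟨p.val.1.val, lt_of_lt_of_le p.val.1.isLt (Nat.sub_le n 1)⟩,
      ⟨p.val.2.val, lt_of_lt_of_le p.val.2.isLt (Nat.sub_le n 1)⟩), p.prop⟩, p.val.2.isLt⟩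
    left_inv := fun q => rfl
    right_inv := fun p => rfl }

lemma cardArith (n : ℕ) (hn : 3 ≤ n) :
    (n - 1) + (n - 1) * (n - 2) / 2 = n * (n - 1) / 2 := by
  rw [show n - 2 = n - 1 - 1 by omega, ← Nat.choose_two_right n,
    ← Nat.choose_two_right (n - 1)]
  obtain ⟨m, rfl⟩ : ∃ m, n = m + 1 := ⟨n - 1, by omega⟩
  simp [Nat.choose_succ_succ, Nat.choose_one_right]


/-- The overlapping map `H`: the `{a,b}`-entry of `HvecZ I` is `1` iff exactly one of
`a`, `b` lies in `I`. -/
def HvecZ {n : ℕ} (I : Finset (Fin n)) : PairIdx n → ℤ :=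
  fun p => if ((p.val.1 ∈ I) ↔ (p.val.2 ∈ I)) then 0 else 1

/-- The family of `(n choose 2)` vectors: `H([1:1]), …, H([1:n-1])`
(0-indexed: `H({0,…,k})` for `k = 0, …, n-2`) together with `2·e_{i,j}` for pairs
`{i,j}` not containing the last vertex (1-indexed: `i < j < n`). -/
def latFam (n : ℕ) :
    (Fin (n - 1) ⊕ {p : PairIdx n // p.val.2.val < n - 1}) → (PairIdx n → ℤ)
  | Sum.inl k => HvecZ (Finset.univ.filter fun x : Fin n => x.val ≤ k.val)
  | Sum.inr q => fun p => if p = q.val then 2 else 0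

theorem stmt4 (n : ℕ) (hn : 3 ≤ n) :
    Fintype.card (Fin (n - 1) ⊕ {p : PairIdx n // p.val.2.val < n - 1}) = n * (n - 1) / 2 ∧
    LinearIndependent ℤ (latFam n) := by
  constructor
  · rw [Fintype.card_sum, Fintype.card_fin, Fintype.card_congr (eSub n), cardPairIdx,
      show n - 1 - 1 = n - 2 by omega]
    exact cardArith n hn
  · rw [Fintype.linearIndependent_iff]
    intro g hg
    -- evaluate the sum at a coordinate p
    have hco : ∀ p : PairIdx n,
        (∑ k : Fin (n - 1), g (Sum.inl k) * latFam n (Sum.inl k) p) +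
        (∑ q : {p : PairIdx n // p.val.2.val < n - 1},
          g (Sum.inr q) * latFam n (Sum.inr q) p) = 0 := by
      intro p
      have := congrFun hg p
      simp only [Finset.sum_apply, Pi.smul_apply, smul_eq_mul, Pi.zero_apply,
        Fintype.sum_sum_type] at this
      exact this
    -- the "last vertex" pairs
    have hlast : ∀ a : Fin (n - 1),
        ∑ k ∈ Finset.univ.filter (fun k : Fin (n - 1) => a.val ≤ k.val),
          g (Sum.inl k) = 0 := by
      intro a
      have hn1 : n - 1 < n := by omega
      set p : PairIdx n := ⟨(⟨a.val, lt_trans a.isLt hn1⟩, ⟨n - 1, hn1⟩),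
        by exact a.isLt⟩ with hp
      have h := hco p
      have h1 : ∀ k : Fin (n - 1), latFam n (Sum.inl k) p =
          if a.val ≤ k.val then 1 else 0 := by
        intro k
        simp only [latFam, HvecZ, hp, Finset.mem_filter, Finset.mem_univ, true_and]
        have hk : ¬ (n - 1 ≤ k.val) := by omega
        by_cases hak : a.val ≤ k.val <;> simp [hak, hk]
      have h2 : ∀ q : {p : PairIdx n // p.val.2.val < n - 1},
          latFam n (Sum.inr q) p = 0 := by
        intro q
        simp only [latFam, ite_eq_right_iff]
        intro hpq
        exfalso
        have := q.prop
        rw [← hpq] at this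
        simp [hp] at this
      have e1 : (∑ k : Fin (n - 1), g (Sum.inl k) * latFam n (Sum.inl k) p) =
          ∑ k : Fin (n - 1), g (Sum.inl k) * (if a.val ≤ k.val then 1 else 0) :=
        Finset.sum_congr rfl (fun k _ => by rw [h1 k])
      have e2 : (∑ q : {p : PairIdx n // p.val.2.val < n - 1},
          g (Sum.inr q) * latFam n (Sum.inr q) p) = 0 :=
        Finset.sum_eq_zero (fun q _ => by rw [h2 q, mul_zero])
      rw [e1, e2, add_zero] at h
      rw [Finset.sum_filter,
        Finset.sum_congr rfl (fun k _ => show (if a.val ≤ k.val then g (Sum.inl k) else 0) =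
          g (Sum.inl k) * (if a.val ≤ k.val then 1 else 0) from by
            by_cases hak : a.val ≤ k.val <;> simp [hak])]
      exact h
    -- coefficients of the H-vectors vanish
    have hc : ∀ k : Fin (n - 1), g (Sum.inl k) = 0 := by
      suffices H : ∀ m : ℕ, ∀ k : Fin (n - 1), n - 1 - k.val = m → g (Sum.inl k) = 0 by
        exact fun k => H _ k rfl
      intro m
      induction m using Nat.strong_induction_on with
      | _ m ih =>
        intro k hk
        have h := hlast k
        rw [Finset.sum_eq_single_of_mem k (by simp)
          (fun j hj hjk => by
            refine ih (n - 1 - j.val) ?_ j rfl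
            simp only [Finset.mem_filter, Finset.mem_univ, true_and] at hj
            have : k.val ≠ j.val := fun he => hjk (Fin.ext he.symm)
            have := j.isLt
            omega)] at h
        exact h
    -- coefficients of the 2e vectors vanish
    rintro (k | q)
    · exact hc k
    · have h := hco q.val
      have e1 : (∑ k : Fin (n - 1), g (Sum.inl k) * latFam n (Sum.inl k) q.val) = 0 :=
        Finset.sum_eq_zero (fun k _ => by rw [hc k, zero_mul])
      rw [e1, zero_add] at h
      rw [Finset.sum_eq_single_of_mem q (by simp)
        (fun j _ hjq => by
          have : ¬ (q.val = j.val) := fun he => hjq (Subtype.ext he.symm)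
          simp [latFam, this]) ] at h
      simp [latFam] at h
      omega
end

section
/- The vectors H([1:1]), ..., H([1:n-1]) together with 2e_{i,j} for 1 ≤ i < j < n form a Z-basis of the additive subgroup (lattice) of Z^(n choose 2) generated by the image of H, i.e., every H(I) for I ⊆ {1,...,n} is an integer linear combination of these vectors, these vectors lie in that subgroup, and they are linearly independent. -/
/-!
Write `e_k := H([0:k])`, whose `{a,b}`-entry is `1` exactly when `a ≤ k < b`. If `I` misses the
last vertex and `f` is the indicator of `I`, then `H(I)_{ab} = (f a - f b) + 2·[a ∉ I, b ∈ I]`;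
the first term is the telescoping sum `∑_{a ≤ k < b} (f k - f (k+1)) (e_k)_{ab}`, and the second
vanishes on pairs containing the last vertex. Since `H(Iᶜ) = H(I)`, this spans every `H(I)`,
while `2e_{ij} = H({i}) + H({j}) - H({i,j})`. For independence, the coordinates `{a, n-1}` only
see the `e_k`, through the suffix sums of their coefficients, which therefore vanish; the
remaining coordinates then read off the coefficients of the `2e_{ij}`.
-/

lemma Fin.sum_filter_sub_succ_eq {M : Type*} [AddCommGroup M] {m a b : ℕ} (hab : a ≤ b)
    (hbm : b ≤ m) (f : ℕ → M) :
    ∑ k : Fin m with a ≤ k.val ∧ k.val < b, (f k - f (k + 1)) = f a - f b := by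
  rw [Finset.sum_filter,
    Fin.sum_univ_eq_sum_range (fun k => if a ≤ k ∧ k < b then f k - f (k + 1) else 0),
    ← Finset.sum_filter]
  have hIco : (Finset.range m).filter (fun k => a ≤ k ∧ k < b) = Finset.Ico a b := by
    ext k
    simp only [Finset.mem_filter, Finset.mem_range, Finset.mem_Ico]
    omega
  rw [hIco, ← neg_sub, ← Finset.sum_Ico_sub (f := f) hab, ← Finset.sum_neg_distrib]
  simp

lemma Fin.eq_zero_of_forall_sum_filter_le_eq_zero {M : Type*} [AddCommGroup M] {m : ℕ}
    {c : Fin m → M} (h : ∀ a < m, ∑ k with a ≤ k.val, c k = 0) (k : Fin m) : c k = 0 := by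
  have hsplit : ∑ j with k.val ≤ j.val, c j = c k + ∑ j with k.val + 1 ≤ j.val, c j := by
    rw [← Finset.add_sum_erase _ _ (by simp : k ∈ Finset.univ.filter (k.val ≤ ·.val))]
    congr 2
    ext j
    simp only [Finset.mem_erase, Finset.mem_filter, Finset.mem_univ, true_and, ne_eq,
      Fin.ext_iff]
    omega
  have htail : ∑ j with k.val + 1 ≤ j.val, c j = 0 := by
    rcases lt_or_ge (k.val + 1) m with hk | hk
    · exact h _ hk
    · exact Finset.sum_eq_zero fun j hj => absurd (Finset.mem_filter.mp hj).2 (by omega)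
  rw [h _ k.isLt, htail, add_zero] at hsplit
  exact hsplit.symm

section

variable {n : ℕ}

lemma HvecZ_compl (I : Finset (Fin n)) : HvecZ Iᶜ = HvecZ I := by
  funext p
  simp only [HvecZ, Finset.mem_compl, not_iff_not]

lemma HvecZ_singleton_add_sub_pair (q : PairIdx n) :
    HvecZ {q.val.1} + HvecZ {q.val.2} - HvecZ {q.val.1, q.val.2} = Pi.single q 2 := by
  funext p
  have hq : q.val.1 < q.val.2 := q.property
  have hp : p.val.1 < p.val.2 := p.property
  have hpq : p = q ↔ p.val.1 = q.val.1 ∧ p.val.2 = q.val.2 := Subtype.ext_iff.trans Prod.ext_iff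
  simp only [HvecZ, Finset.mem_singleton, Finset.mem_insert, Pi.add_apply, Pi.sub_apply,
    Pi.single_apply, hpq]
  split_ifs <;> grind

lemma latFam_inl_apply (k : Fin (n - 1)) (p : PairIdx n) :
    latFam n (Sum.inl k) p = if p.val.1.val ≤ k.val ∧ k.val < p.val.2.val then 1 else 0 := by
  have hp : p.val.1 < p.val.2 := p.property
  simp only [latFam, HvecZ, Finset.mem_filter, Finset.mem_univ, true_and]
  split_ifs <;> omega

lemma latFam_inr (q : {p : PairIdx n // p.val.2.val < n - 1}) :
    latFam n (Sum.inr q) = Pi.single q.val 2 := by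
  funext p
  simp [latFam, Pi.single_apply]

lemma sum_smul_latFam_apply (g : Fin (n - 1) ⊕ {p : PairIdx n // p.val.2.val < n - 1} → ℤ)
    (p : PairIdx n) :
    (∑ i, g i • latFam n i) p =
      (∑ k with p.val.1.val ≤ k.val ∧ k.val < p.val.2.val, g (Sum.inl k)) +
        if h : p.val.2.val < n - 1 then 2 * g (Sum.inr ⟨p, h⟩) else 0 := by
  rw [Fintype.sum_sum_type, Pi.add_apply, Finset.sum_apply, Finset.sum_apply]
  congr 1
  · simp [latFam_inl_apply, Finset.sum_filter]
  · split_ifs with h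
    · rw [Finset.sum_eq_single ⟨p, h⟩]
      · simp [latFam_inr, mul_comm]
      · intro q _ hq
        have hpq : p ≠ q.val := fun hpq => hq (Subtype.ext hpq.symm)
        simp [latFam_inr, hpq]
      · simp
    · refine Finset.sum_eq_zero fun q _ => ?_
      have hpq : p ≠ q.val := fun hpq => h (hpq ▸ q.property)
      simp [latFam_inr, hpq]

lemma latFam_mem_span_range_HvecZ (i : Fin (n - 1) ⊕ {p : PairIdx n // p.val.2.val < n - 1}) :
    latFam n i ∈ Submodule.span ℤ (Set.range (fun I : Finset (Fin n) => HvecZ I)) := by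
  rcases i with k | q
  · exact Submodule.subset_span ⟨_, rfl⟩
  · rw [latFam_inr, ← HvecZ_singleton_add_sub_pair]
    exact sub_mem (add_mem (Submodule.subset_span ⟨_, rfl⟩) (Submodule.subset_span ⟨_, rfl⟩))
      (Submodule.subset_span ⟨_, rfl⟩)

lemma HvecZ_mem_span_latFam (I : Finset (Fin n)) (hI : ∀ x ∈ I, x.val < n - 1) :
    HvecZ I ∈ Submodule.span ℤ (Set.range (latFam n)) := by
  let f : ℕ → ℤ := fun a => if a ∈ I.map Fin.valEmbedding then 1 else 0
  have hf (x : Fin n) : f x = if x ∈ I then 1 else 0 := by simp [f, Fin.val_inj]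
  rw [Submodule.mem_span_range_iff_exists_fun]
  refine ⟨Sum.elim (fun k => f k - f (k + 1))
    (fun q => if q.val.val.1 ∉ I ∧ q.val.val.2 ∈ I then 1 else 0), ?_⟩
  funext p
  have hp : p.val.1 < p.val.2 := p.property
  have hlast : p.val.2 ∈ I → p.val.2.val < n - 1 := hI p.val.2
  rw [sum_smul_latFam_apply]
  simp only [Sum.elim_inl, Sum.elim_inr]
  rw [Fin.sum_filter_sub_succ_eq hp.le (by omega), hf, hf]
  simp only [HvecZ]
  split_ifs <;> grind

lemma linearIndependent_latFam : LinearIndependent ℤ (latFam n) := by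
  rw [Fintype.linearIndependent_iff]
  intro g hg
  have hcoord (p : PairIdx n) :
      (∑ k with p.val.1.val ≤ k.val ∧ k.val < p.val.2.val, g (Sum.inl k)) +
        (if h : p.val.2.val < n - 1 then 2 * g (Sum.inr ⟨p, h⟩) else 0) = 0 := by
    rw [← sum_smul_latFam_apply, hg, Pi.zero_apply]
  have hinl : ∀ k, g (Sum.inl k) = 0 := by
    refine Fin.eq_zero_of_forall_sum_filter_le_eq_zero (c := fun k => g (Sum.inl k))
      fun a ha => ?_
    simpa using hcoord ⟨(⟨a, by omega⟩, ⟨n - 1, by omega⟩), by simp [Fin.lt_def]; omega⟩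
  rintro (k | q)
  · exact hinl k
  · have hq := hcoord q.val
    rw [dif_pos q.property] at hq
    simpa [hinl] using hq

end

theorem stmt5_general (n : ℕ) :
    (∀ k, latFam n k ∈ Submodule.span ℤ (Set.range (fun I : Finset (Fin n) => HvecZ I))) ∧
    (∀ I : Finset (Fin n),
      HvecZ I ∈ Submodule.span ℤ (Set.range (latFam n))) ∧
    LinearIndependent ℤ (latFam n) := by
  refine ⟨latFam_mem_span_range_HvecZ, fun I => ?_, linearIndependent_latFam⟩
  by_cases hI : ∀ x ∈ I, x.val < n - 1
  · exact HvecZ_mem_span_latFam I hI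
  · obtain ⟨last, hlast, hlast_ge⟩ := not_forall₂.mp hI
    rw [← HvecZ_compl]
    refine HvecZ_mem_span_latFam Iᶜ fun y hy => ?_
    have hy_ne : y.val ≠ last.val :=
      Fin.val_ne_iff.mpr fun h => Finset.mem_compl.mp hy (h ▸ hlast)
    omega

/-- The family `latFam n` is a `ℤ`-basis of the lattice generated by the image of `H`:
its members lie in the lattice, they generate every `H(I)`, and they are
linearly independent over `ℤ`. -/
theorem stmt5 (n : ℕ) (hn : 3 ≤ n) :
    (∀ k, latFam n k ∈ Submodule.span ℤ (Set.range (fun I : Finset (Fin n) => HvecZ I))) ∧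
    (∀ I : Finset (Fin n),
      HvecZ I ∈ Submodule.span ℤ (Set.range (latFam n))) ∧
    LinearIndependent ℤ (latFam n) :=
  stmt5_general n
end

section
/- For each 1 ≤ i < n, 2e_{i,n} = 2H([1:i]) - 2H([1:i-1]) - Σ_{k=i+1}^{n-1} 2e_{i,k} + Σ_{k=1}^{i-1} 2e_{k,i} (with H([1:0]) := 0), expressing 2e_{i,n} as an integer combination of the vectors H([1:j]) and 2e_{a,b} with b < n. -/
/-- `Hc I a b` is the `{a,b}`-entry of the overlapping map `H(I)`:
it equals `1` iff exactly one of `a`, `b` lies in `I`. -/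
def Hc (I : Finset ℕ) (a b : ℕ) : ℤ := if ((a ∈ I) ↔ (b ∈ I)) then 0 else 1

/-- `ev i j a b` is the `{a,b}`-entry (with `a < b`) of the standard basis vector `e_{i,j}`
(with `i < j`). -/
def ev (i j a b : ℕ) : ℤ := if a = i ∧ b = j then 1 else 0

theorem stmt6 (n i : ℕ) (hn : 3 ≤ n) (hi : 1 ≤ i) (hin : i < n)
    (a b : ℕ) (ha : 1 ≤ a) (hab : a < b) (hb : b ≤ n) :
    2 * ev i n a b
      = 2 * Hc (Finset.Icc 1 i) a b - 2 * Hc (Finset.Icc 1 (i - 1)) a b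
        - ∑ k ∈ Finset.Icc (i + 1) (n - 1), 2 * ev i k a b
        + ∑ k ∈ Finset.Icc 1 (i - 1), 2 * ev k i a b := by
  have h1 : ∑ k ∈ Finset.Icc (i + 1) (n - 1), 2 * ev i k a b
      = if a = i ∧ i + 1 ≤ b ∧ b ≤ n - 1 then 2 else 0 := by
    simp only [ev, mul_ite, mul_one, mul_zero]
    rw [show (fun k => if a = i ∧ b = k then (2:ℤ) else 0)
        = fun k => if k = b then (if a = i then 2 else 0) else 0 from ?_]
    · rw [Finset.sum_ite_eq']
      simp [Finset.mem_Icc]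
      split_ifs <;> simp_all
    · funext k; by_cases h : a = i <;> by_cases h2 : b = k <;> simp_all [eq_comm]
  have h2 : ∑ k ∈ Finset.Icc 1 (i - 1), 2 * ev k i a b
      = if b = i ∧ 1 ≤ a ∧ a ≤ i - 1 then 2 else 0 := by
    simp only [ev, mul_ite, mul_one, mul_zero]
    rw [show (fun k => if a = k ∧ b = i then (2:ℤ) else 0)
        = fun k => if k = a then (if b = i then 2 else 0) else 0 from ?_]
    · rw [Finset.sum_ite_eq']
      simp [Finset.mem_Icc]
      split_ifs <;> simp_all
    · funext k; by_cases h : b = i <;> by_cases h2 : a = k <;> simp_all [eq_comm]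
  rw [h1, h2]
  simp only [ev, Hc, Finset.mem_Icc]
  split_ifs <;> omega
end

section
/- Let 𝓗 be the adjacency matrix of the line graph of the complete graph K_n (n ≥ 4), m = (n choose 2). Then the eigenvalues of 𝓗 are 2n-4 with multiplicity 1, n-4 with multiplicity n-1, and -2 with multiplicity m-n. -/
/-- The adjacency matrix of the line graph of `K_n`: two edges are adjacent
iff they share exactly one vertex. -/
def lineAdj (n : ℕ) : Matrix (PairIdx n) (PairIdx n) ℝ := fun e f =>
  if e ≠ f ∧ (e.val.1 = f.val.1 ∨ e.val.1 = f.val.2 ∨ e.val.2 = f.val.1 ∨ e.val.2 = f.val.2)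
  then 1 else 0

/-!
Let `N` be the vertex–edge incidence matrix of `K_n`. Two distinct edges share at most one vertex
and every edge has two, so `Nᵀ N = 𝓗 + 2 I`; two distinct vertices span exactly one edge and every
vertex lies on `n - 1` edges, so `N Nᵀ = J + (n - 2) I` with `J` the all-ones matrix. The
characteristic polynomials of `Nᵀ N` and `N Nᵀ` differ by the factor `X ^ (m - n)`, and `J` has
characteristic polynomial `X ^ (n - 1) (X - n)`; shifting by `-2` and `n - 2` gives the spectrum.
-/

open Matrix Polynomial Finset

theorem sum_sum_eq_sum_diag_add_two_nsmul_sum_lt {α M : Type*} [Fintype α] [LinearOrder α]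
    [AddCommMonoid M] (g : α → α → M) (hg : ∀ a b, g a b = g b a) :
    ∑ a, ∑ b, g a b = ∑ a, g a a + 2 • ∑ p : {p : α × α // p.1 < p.2}, g p.1.1 p.1.2 := by
  have hlt : ∑ p : {p : α × α // p.1 < p.2}, g p.1.1 p.1.2
      = ∑ a, ∑ b, if a < b then g a b else 0 := by
    rw [← Finset.sum_subtype (univ.filter fun p : α × α => p.1 < p.2) (by simp)
      (fun p => g p.1 p.2), Finset.sum_filter, Fintype.sum_prod_type]
  have htrichotomy : ∀ a b, g a b = (if a < b then g a b else 0) + (if a = b then g a b else 0)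
      + (if b < a then g b a else 0) := by
    intro a b
    rcases lt_trichotomy a b with h | rfl | h
    · simp [h, h.ne, h.not_gt]
    · simp
    · simp [h, h.ne', h.not_gt, hg a b]
  calc ∑ a, ∑ b, g a b
      = ∑ a, ∑ b, ((if a < b then g a b else 0) + (if a = b then g a b else 0)
          + (if b < a then g b a else 0)) := by simp only [← htrichotomy]
    _ = ∑ a, g a a + 2 • ∑ p : {p : α × α // p.1 < p.2}, g p.1.1 p.1.2 := by
      simp only [Finset.sum_add_distrib, Finset.sum_ite_eq, Finset.mem_univ, if_true]
      rw [hlt, two_nsmul, Finset.sum_comm (f := fun a b => if b < a then g b a else 0)]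
      abel

theorem card_pairIdx (n : ℕ) : Fintype.card (PairIdx n) = n * (n - 1) / 2 := by
  have h := sum_sum_eq_sum_diag_add_two_nsmul_sum_lt (fun (_ _ : Fin n) => 1) (fun _ _ => rfl)
  simp only [Finset.sum_const, Finset.card_univ, Fintype.card_fin, smul_eq_mul, mul_one] at h
  change n * n = n + 2 * Fintype.card (PairIdx n) at h
  rw [Nat.mul_sub_one]
  omega

def pairInc (n : ℕ) : Matrix (Fin n) (PairIdx n) ℝ := fun v e =>
  (if v = e.val.1 then 1 else 0) + (if v = e.val.2 then 1 else 0)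

theorem pairInc_transpose_mul_self (n : ℕ) :
    (pairInc n)ᵀ * pairInc n = lineAdj n + scalar (PairIdx n) (2 : ℝ) := by
  ext e f
  have hcommon : ((pairInc n)ᵀ * pairInc n) e f
      = (if e.val.1 = f.val.1 then 1 else 0) + (if e.val.1 = f.val.2 then 1 else 0)
        + ((if e.val.2 = f.val.1 then 1 else 0) + (if e.val.2 = f.val.2 then 1 else 0)) := by
    simp only [mul_apply, transpose_apply, pairInc, mul_add, mul_ite, mul_one, mul_zero,
      sum_add_distrib, sum_ite_eq', mem_univ, if_true, eq_comm]
    abel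
  have hext : e = f ↔ e.val.1 = f.val.1 ∧ e.val.2 = f.val.2 := Subtype.ext_iff.trans Prod.ext_iff
  have he : e.val.1 < e.val.2 := e.prop
  have hf : f.val.1 < f.val.2 := f.prop
  rw [hcommon]
  simp only [lineAdj, Matrix.add_apply, scalar_apply, diagonal_apply, hext]
  split_ifs <;> grind

theorem pairInc_mul_transpose_self (n : ℕ) :
    pairInc n * (pairInc n)ᵀ = vecMulVec 1 1 + scalar (Fin n) ((n : ℝ) - 2) := by
  ext v w
  set g : Fin n → Fin n → ℝ := fun a b =>
    ((if v = a then 1 else 0) + (if v = b then 1 else 0))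
      * ((if w = a then 1 else 0) + (if w = b then 1 else 0)) with hg
  have hpairs := sum_sum_eq_sum_diag_add_two_nsmul_sum_lt g (fun a b => by simp only [hg]; ring)
  have hentry : (pairInc n * (pairInc n)ᵀ) v w
      = ∑ p : {p : Fin n × Fin n // p.1 < p.2}, g p.1.1 p.1.2 := rfl
  have hfull : ∑ a, ∑ b, g a b = 2 * n * (if v = w then 1 else 0) + 2 := by
    simp only [hg, mul_add, mul_ite, mul_one, mul_zero, sum_add_distrib, sum_ite_irrel, sum_const,
      card_univ, Fintype.card_fin, nsmul_eq_mul, sum_ite_eq, mem_univ, if_true]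
    split_ifs <;> ring
  have hdiag : ∑ a, g a a = 4 * (if v = w then 1 else 0) := by
    have hg_diag (a : Fin n) :
        g a a = 4 * ((if v = a then 1 else 0) * (if w = a then 1 else 0)) := by
      simp only [hg]; ring
    simp [hg_diag]
  rw [hentry]
  simp only [Matrix.add_apply, vecMulVec_apply, Pi.one_apply, scalar_apply, diagonal_apply]
  rw [hfull, hdiag, two_nsmul] at hpairs
  split_ifs at hpairs ⊢ <;> linarith

theorem Matrix.charpoly_add_scalar {ι R : Type*} [Fintype ι] [DecidableEq ι] [CommRing R]
    (M : Matrix ι ι R) (μ : R) :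
    (M + scalar ι μ).charpoly = M.charpoly.comp (X - C μ) := by
  have h := charpoly_sub_scalar (M + scalar ι μ) μ
  rw [add_sub_cancel_right] at h
  rw [h, comp_assoc]
  simp

theorem Matrix.charpoly_vecMulVec_one {ι R : Type*} [Fintype ι] [DecidableEq ι] [Nonempty ι]
    [CommRing R] :
    (vecMulVec (1 : ι → R) 1).charpoly
      = X ^ (Fintype.card ι - 1) * (X - C (Fintype.card ι : R)) := by
  have hpow : (X : R[X]) ^ Fintype.card ι = X ^ (Fintype.card ι - 1) * X := by
    rw [← pow_succ, Nat.sub_add_cancel Fintype.card_pos]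
  rw [charpoly_vecMulVec, one_dotProduct_one, hpow, smul_eq_C_mul]
  ring

/-- The eigenvalues of the line graph of `K_n` are `2n-4` (multiplicity `1`),
`n-4` (multiplicity `n-1`) and `-2` (multiplicity `m-n`), stated via the
characteristic polynomial. -/
theorem stmt11 (n : ℕ) (hn : 4 ≤ n) :
    (lineAdj n).charpoly
      = (Polynomial.X - Polynomial.C (2 * (n : ℝ) - 4))
        * (Polynomial.X - Polynomial.C ((n : ℝ) - 4)) ^ (n - 1)
        * (Polynomial.X + Polynomial.C 2) ^ (n * (n - 1) / 2 - n) := by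
  have : Nonempty (Fin n) := ⟨⟨0, by omega⟩⟩
  have hle : Fintype.card (Fin n) ≤ Fintype.card (PairIdx n) := by
    rw [card_pairIdx, Fintype.card_fin, Nat.le_div_iff_mul_le two_pos]
    exact Nat.mul_le_mul_left n (by omega)
  rw [eq_sub_of_add_eq (pairInc_transpose_mul_self n).symm, charpoly_sub_scalar,
    charpoly_mul_comm_of_le _ _ hle, pairInc_mul_transpose_self, charpoly_add_scalar,
    charpoly_vecMulVec_one, card_pairIdx, Fintype.card_fin]
  simp only [mul_comp, pow_comp, sub_comp, X_comp, natCast_comp, ofNat_comp, map_sub, map_mul,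
    map_natCast, map_ofNat]
  ring
end

section
/- Any n-1 of the vectors H_i - (2/n)·𝟏 (for i in a fixed set of n-1 indices among {1,...,n}) are linearly independent over R, where H_i ∈ R^(n choose 2) has {a,b}-entry 1 iff i ∈ {a,b} and 𝟏 is the all-ones vector. -/
/-- `H_i := H({i})`: the indicator vector of the edges incident to vertex `i`. -/
def Hv (n : ℕ) (i : Fin n) : PairIdx n → ℝ := fun p =>
  if p.val.1 = i ∨ p.val.2 = i then 1 else 0

/-! Evaluating a vanishing combination `∑ g j • (w j - c • 𝟏)` at the coordinate `p i` gives
`g i = c * ∑ g`; summing over `i` forces `∑ g = 0` as long as `card ι * c ≠ 1`, hence `g = 0`.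
For the vectors `H_i - (2/n)·𝟏`, `i ≠ v`, where `v` is the vertex left out, `p i` is the edge
`{i, v}`, which meets no other `H_j`; and `(n - 1) · 2/n ≠ 1` because `n ≠ 2`. -/

theorem linearIndependent_sub_smul_const {K ι α : Type*} [Field K] [Fintype ι] [DecidableEq ι]
    (w : ι → α → K) (c : K) (p : ι → α) (hp : ∀ i j, w j (p i) = if j = i then 1 else 0)
    (hc : Fintype.card ι * c ≠ 1) :
    LinearIndependent K (fun i => w i - c • fun _ => (1 : K)) := by
  rw [Fintype.linearIndependent_iff]
  intro g hg
  have hcoord : ∀ i, g i = c * ∑ j, g j := fun i => by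
    have h := congrFun hg (p i)
    simp only [Finset.sum_apply, Pi.smul_apply, Pi.sub_apply, hp, smul_eq_mul, Pi.zero_apply] at h
    simp only [mul_sub, Finset.sum_sub_distrib, mul_ite, mul_one, mul_zero, Finset.sum_ite_eq',
      Finset.mem_univ, if_true, ← Finset.sum_mul] at h
    linear_combination h
  have hsum : ∑ j, g j = 0 := by
    have h : ∑ j, g j = Fintype.card ι * c * ∑ j, g j :=
      calc ∑ j, g j = ∑ _i : ι, c * ∑ j, g j := Finset.sum_congr rfl fun i _ => hcoord i
        _ = Fintype.card ι * c * ∑ j, g j := by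
          rw [Finset.sum_const, Finset.card_univ, nsmul_eq_mul, mul_assoc]
    have h' : (1 - Fintype.card ι * c) * ∑ j, g j = 0 := by linear_combination h
    exact (mul_eq_zero.mp h').resolve_left (sub_ne_zero.mpr hc.symm)
  intro i
  rw [hcoord i, hsum, mul_zero]

def PairIdx.edge {n : ℕ} {i j : Fin n} (h : i ≠ j) : PairIdx n :=
  ⟨if i < j then (i, j) else (j, i), by
    split_ifs with hlt
    exacts [hlt, lt_of_le_of_ne (not_lt.mp hlt) h.symm]⟩

theorem Hv_edge {n : ℕ} {i j : Fin n} (h : i ≠ j) (k : Fin n) :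
    Hv n k (PairIdx.edge h) = if i = k ∨ j = k then 1 else 0 := by
  unfold Hv PairIdx.edge
  by_cases hlt : i < j <;> simp only [hlt, if_true, if_false, or_comm]

/-- Any `n-1` of the vectors `H_i - (2/n)·𝟏` are linearly independent over `ℝ`. -/
theorem stmt14 (n : ℕ) (hn : 3 ≤ n) (S : Finset (Fin n)) (hS : S.card = n - 1) :
    LinearIndependent ℝ
      (fun i : S => Hv n i - (2 / (n : ℝ)) • (fun _ : PairIdx n => (1 : ℝ))) := by
  obtain ⟨v, hv⟩ : ∃ v, Sᶜ = {v} :=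
    Finset.card_eq_one.mp (by rw [Finset.card_compl, hS, Fintype.card_fin]; omega)
  have hvS : ∀ i ∈ S, i ≠ v := fun i hi hiv =>
    Finset.mem_compl.mp (hv ▸ Finset.mem_singleton_self v) (hiv ▸ hi)
  refine linearIndependent_sub_smul_const (fun i : S => Hv n i) _
    (fun i => PairIdx.edge (hvS i i.2)) (fun i j => ?_) ?_
  · simp only [Hv_edge, (hvS j j.2).symm, or_false, eq_comm (a := (i : Fin n)), Subtype.ext_iff]
  · have hn' : (3 : ℝ) ≤ n := by exact_mod_cast hn
    rw [Fintype.card_coe, hS, Nat.cast_sub (by omega), Nat.cast_one, Ne, ← mul_div_assoc,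
      div_eq_one_iff_eq (by positivity)]
    linarith
end

section
/- Let p₁, ..., p_n be distinct primes and let p be a square-free positive integer coprime to p₁⋯p_n with p > 1. Then √p does not lie in the field K_n = Q(√p₁, ..., √p_n); moreover [K_n : Q] = 2^n. -/
/-!
Induct on `n`, adjoining one square root at a time. If `α ∉ F` and `α² ∈ F`, every element of
`F(α)` is `y + z α` with `y, z ∈ F`; hence `[F(α) : F] = 2`, and an `x ∈ F(α)` with `x² ∈ F`
lies in `F` or has `x α ∈ F`. For `α = √ℓ` and `x = √q` the second alternative puts `√(qℓ)`
in `F`, and `qℓ` is again squarefree and coprime to the earlier primes; so both alternatives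
contradict the induction hypothesis, which is therefore stated for all such `q` at once.
-/

open IntermediateField Polynomial

namespace IntermediateField

variable {K L : Type*} [Field K] [Field L] [Algebra K L] (F : IntermediateField K L) {α : L}

theorem exists_eq_add_mul_of_mem_adjoin_of_mul_self_mem (hα : α * α ∈ F) {x : L}
    (hx : x ∈ adjoin F {α}) : ∃ y ∈ F, ∃ z ∈ F, x = y + z * α := by
  have hint : IsIntegral F α :=
    ⟨X ^ 2 - C ⟨α * α, hα⟩, monic_X_pow_sub_C _ two_ne_zero, by simp [sq]⟩
  rw [← mem_toSubalgebra, adjoin_simple_toSubalgebra_of_isAlgebraic hint.isAlgebraic] at hx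
  induction hx using Algebra.adjoin_induction with
  | mem u hu => exact ⟨0, F.zero_mem, 1, F.one_mem, by rw [Set.mem_singleton_iff.mp hu]; ring⟩
  | algebraMap r => exact ⟨r, r.2, 0, F.zero_mem, by simp⟩
  | add u v _ _ ihu ihv =>
    obtain ⟨y, hy, z, hz, rfl⟩ := ihu
    obtain ⟨y', hy', z', hz', rfl⟩ := ihv
    exact ⟨y + y', add_mem hy hy', z + z', add_mem hz hz', by ring⟩
  | mul u v _ _ ihu ihv =>
    obtain ⟨y, hy, z, hz, rfl⟩ := ihu
    obtain ⟨y', hy', z', hz', rfl⟩ := ihv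
    refine ⟨y * y' + z * z' * (α * α), ?_, y * z' + z * y', ?_, by ring⟩
    · exact add_mem (mul_mem hy hy') (mul_mem (mul_mem hz hz') hα)
    · exact add_mem (mul_mem hy hz') (mul_mem hz hy')

/-- Writing `x = y + z α`, the cross term `2 y z α` of `x²` lies in `F` only if `y z = 0`. -/
theorem mem_or_mul_mem_of_mem_adjoin_of_mul_self_mem [NeZero (2 : L)] (hα : α ∉ F)
    (hα2 : α * α ∈ F) {x : L} (hx : x ∈ adjoin F {α}) (hx2 : x * x ∈ F) :
    x ∈ F ∨ x * α ∈ F := by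
  obtain ⟨y, hy, z, hz, rfl⟩ := exists_eq_add_mul_of_mem_adjoin_of_mul_self_mem F hα2 hx
  have hcross : 2 * y * z * α ∈ F := by
    have := sub_mem (sub_mem hx2 (mul_mem hy hy)) (mul_mem (mul_mem hz hz) hα2)
    convert this using 1; ring
  by_cases hyz : 2 * y * z = 0
  · rcases mul_eq_zero.mp hyz with h | rfl
    · obtain rfl := (mul_eq_zero.mp h).resolve_left two_ne_zero
      right; simpa [mul_assoc] using mul_mem hz hα2
    · left; simpa using hy
  · refine absurd ?_ hα
    rw [← inv_mul_cancel_left₀ hyz α]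
    exact mul_mem (inv_mem (mul_mem (mul_mem (ofNat_mem F 2) hy) hz)) hcross

theorem finrank_adjoin_of_mul_self_mem (hα : α ∉ F) (hα2 : α * α ∈ F) :
    Module.finrank F (adjoin F {α}) = 2 := by
  set c : F := ⟨α * α, hα2⟩
  have hroot : ∀ b : F, b ^ 2 ≠ c := by
    intro b hb
    have : ((b : L) - α) * (b + α) = 0 := by
      have := congrArg Subtype.val hb
      simp only [c, SubmonoidClass.coe_pow] at this
      linear_combination this
    rcases mul_eq_zero.mp this with h | h
    · exact hα (sub_eq_zero.mp h ▸ b.2)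
    · exact hα (eq_neg_of_add_eq_zero_right h ▸ neg_mem b.2)
  have hmin : minpoly F α = X ^ 2 - C c :=
    (minpoly.eq_of_irreducible_of_monic (X_pow_sub_C_irreducible_of_prime Nat.prime_two hroot)
      (by simp [c, sq]) (monic_X_pow_sub_C c two_ne_zero)).symm
  have hint : IsIntegral F α := by
    rw [← minpoly.ne_zero_iff, hmin]; exact (monic_X_pow_sub_C c two_ne_zero).ne_zero
  rw [adjoin.finrank hint, hmin, natDegree_X_pow_sub_C]

theorem finrank_restrictScalars_adjoin_of_mul_self_mem (hα : α ∉ F) (hα2 : α * α ∈ F) :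
    Module.finrank K ((adjoin F {α}).restrictScalars K) = 2 * Module.finrank K F := by
  change Module.finrank K (adjoin F {α}) = _
  rw [← Module.finrank_mul_finrank K F (adjoin F {α}), finrank_adjoin_of_mul_self_mem F hα hα2,
    mul_comm]

end IntermediateField

theorem Nat.not_isSquare_of_squarefree {q : ℕ} (hq1 : 1 < q) (hqsf : Squarefree q) :
    ¬IsSquare q := by
  rintro ⟨r, rfl⟩
  obtain rfl := Nat.isUnit_iff.mp (hqsf r dvd_rfl)
  exact hq1.ne' rfl

theorem sqrt_natCast_notMem_bot {q : ℕ} (hq1 : 1 < q) (hqsf : Squarefree q) :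
    √(q : ℝ) ∉ (⊥ : IntermediateField ℚ ℝ) := by
  rw [mem_bot]
  exact irrational_sqrt_natCast_iff.mpr (Nat.not_isSquare_of_squarefree hq1 hqsf)

theorem sqrt_natCast_mul_self_mem (F : IntermediateField ℚ ℝ) (k : ℕ) :
    √(k : ℝ) * √(k : ℝ) ∈ F := by
  rw [Real.mul_self_sqrt k.cast_nonneg]
  exact IntermediateField.natCast_mem F k

theorem sqrt_natCast_notMem_adjoin_sqrt_prime (F : IntermediateField ℚ ℝ) {m ℓ : ℕ}
    (hℓ : ℓ.Prime) (hℓm : ℓ.Coprime m)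
    (hF : ∀ q : ℕ, 1 < q → Squarefree q → q.Coprime m → √(q : ℝ) ∉ F)
    {q : ℕ} (hq1 : 1 < q) (hqsf : Squarefree q) (hqℓm : q.Coprime (ℓ * m)) :
    √(q : ℝ) ∉ adjoin F {√(ℓ : ℝ)} := by
  intro hq
  obtain ⟨hqℓ, hqm⟩ := Nat.coprime_mul_iff_right.mp hqℓm
  have hℓF : √(ℓ : ℝ) ∉ F := hF ℓ hℓ.one_lt hℓ.squarefree hℓm
  rcases mem_or_mul_mem_of_mem_adjoin_of_mul_self_mem F hℓF (sqrt_natCast_mul_self_mem F ℓ) hq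
    (sqrt_natCast_mul_self_mem F q) with h | h
  · exact hF q hq1 hqsf hqm h
  · rw [← Real.sqrt_mul q.cast_nonneg, ← Nat.cast_mul] at h
    exact hF (q * ℓ) (hq1.trans_le (Nat.le_mul_of_pos_right q hℓ.pos))
      ((Nat.squarefree_mul hqℓ).mpr ⟨hqsf, hℓ.squarefree⟩)
      (Nat.Coprime.mul_left hqm hℓm) h

theorem adjoin_range_sqrt_fin_succ {n : ℕ} (p : Fin (n + 1) → ℕ) :
    adjoin ℚ (Set.range fun i => √(p i : ℝ)) =
      (adjoin (adjoin ℚ (Set.range fun i : Fin n => √(p i.succ : ℝ))) {√(p 0 : ℝ)}).restrictScalars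
        ℚ := by
  rw [Fin.range_fin_succ, Set.insert_eq, Set.union_comm, ← adjoin_adjoin_left]
  rfl

theorem sqrt_notMem_adjoin_sqrt_primes_and_finrank {n : ℕ} (p : Fin n → ℕ)
    (hp : ∀ i, (p i).Prime) (hinj : Function.Injective p) :
    (∀ q : ℕ, 1 < q → Squarefree q → q.Coprime (∏ i, p i) →
      √(q : ℝ) ∉ adjoin ℚ (Set.range fun i => √(p i : ℝ))) ∧
    Module.finrank ℚ (adjoin ℚ (Set.range fun i => √(p i : ℝ))) = 2 ^ n := by
  induction n with
  | zero =>
    rw [Set.range_eq_empty, adjoin_empty, IntermediateField.finrank_bot]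
    exact ⟨fun q hq1 hqsf _ => sqrt_natCast_notMem_bot hq1 hqsf, rfl⟩
  | succ n ih =>
    obtain ⟨hF, hdeg⟩ := ih (fun i => p i.succ) (fun i => hp i.succ)
      (hinj.comp (Fin.succ_injective n))
    have hp0 : (p 0).Coprime (∏ i : Fin n, p i.succ) := Nat.Coprime.prod_right fun i _ =>
      (Nat.coprime_primes (hp 0) (hp i.succ)).mpr (hinj.ne (Fin.succ_ne_zero i).symm)
    rw [adjoin_range_sqrt_fin_succ, Fin.prod_univ_succ]
    refine ⟨fun q hq1 hqsf hcop => ?_, ?_⟩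
    · rw [mem_restrictScalars]
      exact sqrt_natCast_notMem_adjoin_sqrt_prime _ (hp 0) hp0 hF hq1 hqsf hcop
    · refine (finrank_restrictScalars_adjoin_of_mul_self_mem _
        (hF _ (hp 0).one_lt (hp 0).squarefree hp0) (sqrt_natCast_mul_self_mem _ _)).trans ?_
      rw [hdeg, pow_succ']

/-- Let `p₁, …, p_n` be distinct primes and `p > 1` a square-free positive integer coprime
to `p₁⋯p_n`. Then `√p ∉ K_n = ℚ(√p₁, …, √p_n)` and `[K_n : ℚ] = 2^n`. -/
theorem stmt19 (n : ℕ) (p : Fin n → ℕ) (hp : ∀ i, Nat.Prime (p i))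
    (hpinj : Function.Injective p)
    (q : ℕ) (hq1 : 1 < q) (hqsf : Squarefree q)
    (hcop : Nat.Coprime q (∏ i, p i)) :
    Real.sqrt q ∉
        IntermediateField.adjoin ℚ (Set.range fun i => Real.sqrt (p i)) ∧
    Module.finrank ℚ
        (IntermediateField.adjoin ℚ (Set.range fun i => Real.sqrt (p i))) = 2 ^ n :=
  have ⟨hnotMem, hfinrank⟩ := sqrt_notMem_adjoin_sqrt_primes_and_finrank p hp hpinj
  ⟨hnotMem q hq1 hqsf hcop, hfinrank⟩
end
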